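/- Let φ: E → E' be a cyclic k-isogeny of degree d between elliptic curves over a field k of characteristic 0, n a positive integer, m = gcd(d,n), and b an integer. Then the scalar endomorphism [b] of the n-torsion E'_n lies in the image of the map Hom(E_n, E'_n) → End(E'_n), f ↦ f∘φ^∨, if and only if m divides b. -/
import Mathlib


/-- The `n`-torsion subgroup of an abelian group. -/
def nTorsion (n : ℕ) (A : Type) [AddCommGroup A] : AddSubgroup A where
  carrier := {x | n • x = 0}
  zero_mem' := by simp
  add_mem' := by
    intro a b ha hb
    simp only [Set.mem_setOf_eq] at *
    rw [smul_add, ha, hb, add_zero]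
  neg_mem' := by
    intro a ha
    simp only [Set.mem_setOf_eq] at *
    rw [smul_neg, ha, neg_zero]

/-- The restriction of a group homomorphism to `n`-torsion subgroups. -/
def torsMap {A B : Type} [AddCommGroup A] [AddCommGroup B] (n : ℕ) (g : A →+ B) :
    nTorsion n A →+ nTorsion n B where
  toFun x := ⟨g x, by
    show n • g (x : A) = 0
    rw [← map_nsmul, show n • (x : A) = 0 from x.2, map_zero]⟩
  map_zero' := Subtype.ext (by simp)
  map_add' a b := Subtype.ext (by simp)

lemma mem_nTorsion_iff {A : Type} [AddCommGroup A] {n : ℕ} {x : A} :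
    x ∈ nTorsion n A ↔ n • x = 0 := Iff.rfl

lemma card_nTorsion_le_of_isAddCyclic {K : Type} [AddCommGroup K] [IsAddCyclic K] [Finite K]
    (p : ℕ) (hp : 0 < p) : Nat.card (nTorsion p K) ≤ p := by
  obtain ⟨g, hg⟩ := IsAddCyclic.exists_generator (α := nTorsion p K)
  have h1 : addOrderOf g = Nat.card (nTorsion p K) :=
    addOrderOf_eq_card_of_forall_mem_zmultiples hg
  have hpg : p • g = 0 := by
    apply Subtype.ext
    have : ((p • g : nTorsion p K) : K) = p • (g : K) :=
      map_nsmul ((nTorsion p K).subtype) p g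
    rw [this]
    exact g.2
  have h2 : addOrderOf g ∣ p := addOrderOf_dvd_of_nsmul_eq_zero hpg
  exact Nat.le_of_dvd hp (h1 ▸ h2)

lemma exists_elt {E E' : Type} [AddCommGroup E] [AddCommGroup E']
    (htorsE : ∀ m : ℕ, 0 < m → Nat.card (nTorsion m E) = m ^ 2)
    (φ : E →+ E') (hkfin : Finite φ.ker) (hφcyc : IsAddCyclic φ.ker)
    (p c : ℕ) (hp : p.Prime) (hc : 0 < c) :
    ∃ v : E, p ^ c • v = 0 ∧ φ (p ^ (c - 1) • v) ≠ 0 := by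
  by_contra hcon
  push_neg at hcon
  set N := nTorsion (p ^ c) E with hN
  have hNcard : Nat.card N = (p ^ c) ^ 2 := htorsE _ (pow_pos hp.pos c)
  have hNfin : Finite N := Nat.finite_of_card_ne_zero (by
    rw [hNcard]; exact (pow_pos (pow_pos hp.pos c) 2).ne')
  set θ : N →+ E := p ^ (c - 1) • N.subtype with hθ
  have hθval : ∀ v : N, θ v = p ^ (c - 1) • (v : E) := fun v => rfl
  -- cardinality of the kernel of θ
  have hkercard : Nat.card θ.ker = (p ^ (c - 1)) ^ 2 := by
    rw [← htorsE (p ^ (c - 1)) (pow_pos hp.pos _)]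
    apply Nat.card_congr
    refine ⟨fun x => ⟨(x : N), ?_⟩, fun y => ⟨⟨(y : E), ?_⟩, ?_⟩, ?_, ?_⟩
    · have := x.2
      rw [AddMonoidHom.mem_ker, hθval] at this
      exact this
    · show p ^ c • (y : E) = 0
      have h1 : c - 1 + 1 = c := Nat.succ_pred_eq_of_pos hc
      have h2 : p ^ c = p * p ^ (c - 1) := by rw [← pow_succ', h1]
      rw [h2, mul_smul, show p ^ (c - 1) • (y : E) = 0 from y.2, smul_zero]
    · show θ _ = 0
      rw [hθval]
      exact y.2
    · intro x; apply Subtype.ext; apply Subtype.ext; rfl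
    · intro y; apply Subtype.ext; rfl
  -- the range of θ is contained in the p-torsion of the kernel of φ
  have hrangele : Nat.card θ.range ≤ p := by
    have hmap : ∀ x : θ.range, φ (x : E) = 0 ∧ p • (x : E) = 0 := by
      rintro ⟨x, v, rfl⟩
      show φ (θ v) = 0 ∧ p • θ v = 0
      rw [hθval]
      constructor
      · exact hcon v.1 v.2
      · have h1 : c - 1 + 1 = c := Nat.succ_pred_eq_of_pos hc
        rw [smul_smul, ← pow_succ', h1]
        exact v.2
    have hinj : Function.Injective
        (fun x : θ.range => (⟨⟨(x : E), (hmap x).1⟩, Subtype.ext (by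
          have : ((p • (⟨(x : E), (hmap x).1⟩ : φ.ker) : φ.ker) : E) = p • (x : E) :=
            map_nsmul (φ.ker.subtype) p _
          rw [this]
          exact (hmap x).2)⟩ : nTorsion p φ.ker)) := by
      intro a b hab
      apply Subtype.ext
      exact congrArg (fun z => ((z : φ.ker) : E)) (congrArg Subtype.val hab)
    calc Nat.card θ.range ≤ Nat.card (nTorsion p φ.ker) := Nat.card_le_card_of_injective _ hinj
      _ ≤ p := card_nTorsion_le_of_isAddCyclic p hp.pos
  -- counting contradiction
  have hsplit : Nat.card N = Nat.card (N ⧸ θ.ker) * Nat.card θ.ker :=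
    AddSubgroup.card_eq_card_quotient_mul_card_addSubgroup θ.ker
  have hquot : Nat.card (N ⧸ θ.ker) = Nat.card θ.range :=
    Nat.card_congr (QuotientAddGroup.quotientKerEquivRange θ).toEquiv
  rw [hNcard, hquot, hkercard] at hsplit
  have hle : (p ^ c) ^ 2 ≤ p * (p ^ (c - 1)) ^ 2 := by
    rw [hsplit]
    exact Nat.mul_le_mul_right _ hrangele
  have hlt : p * (p ^ (c - 1)) ^ 2 < (p ^ c) ^ 2 := by
    have h1 : p * (p ^ (c - 1)) ^ 2 = p ^ (2 * (c - 1) + 1) := by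
      rw [← pow_mul, mul_comm (c-1) 2, pow_succ, mul_comm]
    have h2 : (p ^ c) ^ 2 = p ^ (c * 2) := by rw [← pow_mul]
    rw [h1, h2]
    exact Nat.pow_lt_pow_right hp.one_lt (by omega)
  omega

lemma nTorsion_coe_zsmul {A : Type} [AddCommGroup A] (H : AddSubgroup A) (c : ℤ) (x : H) :
    ((c • x : H) : A) = c • (x : A) := map_zsmul H.subtype c x

/-- Let `φ : E → E'` be a cyclic `k`-isogeny of degree `d` between elliptic
curves over a field `k` of characteristic `0` — here modelled on geometric points: `E, E'` are
divisible abelian groups with `m`-torsion of order `m²`, and `φ` is a surjective homomorphism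
with cyclic kernel of order `d` admitting a dual `φ^∨` with `φ^∨ ∘ φ = [d]` and
`φ ∘ φ^∨ = [d]`.  Let `n` be a positive integer, `m = gcd(d, n)`, and `b` an integer.  Then the
scalar endomorphism `[b]` of the `n`-torsion `E'_n` lies in the image of the map
`Hom(E_n, E'_n) → End(E'_n)`, `f ↦ f ∘ φ^∨`, if and only if `m` divides `b`. -/
theorem scalar_in_image_of_dual_composition_iff
    (k : Type) [Field k] [CharZero k]
    (E E' : Type) [AddCommGroup E] [AddCommGroup E']
    (hdivE : ∀ m : ℕ, 0 < m → Function.Surjective fun x : E => m • x)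
    (hdivE' : ∀ m : ℕ, 0 < m → Function.Surjective fun x : E' => m • x)
    (htorsE : ∀ m : ℕ, 0 < m → Nat.card (nTorsion m E) = m ^ 2)
    (htorsE' : ∀ m : ℕ, 0 < m → Nat.card (nTorsion m E') = m ^ 2)
    (d : ℕ) (hd : 0 < d)
    (φ : E →+ E') (hφsurj : Function.Surjective φ)
    (hφker : Nat.card φ.ker = d) (hφcyc : IsAddCyclic φ.ker)
    (φdual : E' →+ E)
    (hdual₁ : φdual.comp φ = d • AddMonoidHom.id E)
    (hdual₂ : φ.comp φdual = d • AddMonoidHom.id E')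
    (n : ℕ) (hn : 0 < n) (b : ℤ) :
    (∃ f : nTorsion n E →+ nTorsion n E',
        f.comp (torsMap n φdual) = b • AddMonoidHom.id ↥(nTorsion n E')) ↔
      (Nat.gcd d n : ℤ) ∣ b := by
  have hdv : ∀ v : E, φdual (φ v) = d • v := by
    intro v
    have := congrArg (fun g => g v) hdual₁
    simpa using this
  have hdv' : ∀ z : E', φ (φdual z) = d • z := by
    intro z
    have := congrArg (fun g => g z) hdual₂
    simpa using this
  constructor
  · rintro ⟨f, hf⟩
    have key : ∀ t : E', n • t = 0 → φdual t = 0 → b • t = 0 := by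
      intro t ht h1
      have h2 : (torsMap n φdual) ⟨t, ht⟩ = 0 := Subtype.ext h1
      have h3 := congrArg (fun g => g ⟨t, ht⟩) hf
      simp only [AddMonoidHom.comp_apply, AddMonoidHom.smul_apply, AddMonoidHom.id_apply] at h3
      rw [h2, map_zero] at h3
      have h4 := congrArg Subtype.val h3.symm
      have h5 : ((b • (⟨t, ht⟩ : nTorsion n E') : nTorsion n E') : E') = b • t :=
        map_zsmul ((nTorsion n E').subtype) b _
      rw [h5] at h4
      simpa using h4
    rcases eq_or_ne b 0 with rfl | hb0
    · exact dvd_zero _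
    have hm0 : Nat.gcd d n ≠ 0 := Nat.gcd_ne_zero_left hd.ne'
    have hb0' : b.natAbs ≠ 0 := Int.natAbs_ne_zero.mpr hb0
    have hnat : Nat.gcd d n ∣ b.natAbs := by
      rw [← Nat.factorization_le_iff_dvd hm0 hb0', Finsupp.le_def]
      intro p
      by_cases hpp : p.Prime
      swap
      · simp [Nat.factorization_eq_zero_of_not_prime _ hpp]
      set a := (Nat.gcd d n).factorization p with ha
      rcases Nat.eq_zero_or_pos a with ha0 | hapos
      · simp [ha0]
      set c := d.factorization p with hc
      have hac : a ≤ c := by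
        have h6 := (Nat.factorization_le_iff_dvd hm0 hd.ne').mpr (Nat.gcd_dvd_left d n)
        exact h6 p
      have hcpos : 0 < c := lt_of_lt_of_le hapos hac
      have hpan : p ^ a ∣ n := dvd_trans (Nat.ordProj_dvd _ p) (Nat.gcd_dvd_right d n)
      have hpcd : p ^ c ∣ d := Nat.ordProj_dvd _ p
      have hkfin : Finite φ.ker := Nat.finite_of_card_ne_zero (by rw [hφker]; exact hd.ne')
      obtain ⟨v, hv1, hv2⟩ := exists_elt htorsE φ hkfin hφcyc p c hpp hcpos
      set w := φ v with hw
      have hw1 : p ^ c • w = 0 := by rw [hw, ← map_nsmul, hv1, map_zero]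
      have hw2 : p ^ (c - 1) • w ≠ 0 := by rw [hw, ← map_nsmul]; exact hv2
      have horder : addOrderOf w = p ^ c := by
        have h1 : addOrderOf w ∣ p ^ c := addOrderOf_dvd_of_nsmul_eq_zero hw1
        rcases (Nat.dvd_prime_pow hpp).1 h1 with ⟨e, hec, heq⟩
        rcases Nat.lt_or_ge e c with hlt | hge
        · exfalso
          apply hw2
          apply addOrderOf_dvd_iff_nsmul_eq_zero.mp
          rw [heq]
          exact pow_dvd_pow p (by omega)
        · rw [heq]; congr 1; omega
      set t := p ^ (c - a) • w with htdef
      have htord : addOrderOf t = p ^ a := by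
        rw [htdef, addOrderOf_nsmul' w (pow_ne_zero _ hpp.pos.ne'), horder]
        have hgcd : Nat.gcd (p ^ c) (p ^ (c - a)) = p ^ (c - a) := by
          rw [Nat.gcd_comm]
          exact Nat.gcd_eq_left (pow_dvd_pow p (Nat.sub_le c a))
        rw [hgcd, Nat.pow_div (Nat.sub_le c a) hpp.pos, Nat.sub_sub_self hac]
      have htn : n • t = 0 := by
        obtain ⟨n', hn'⟩ := hpan
        rw [htdef, smul_smul, hn']
        have h7 : p ^ a * n' * p ^ (c - a) = n' * p ^ c := by
          rw [mul_comm (p ^ a) n', mul_assoc, ← pow_add]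
          congr 2
          omega
        rw [h7, mul_smul, hw1, smul_zero]
      have htdual : φdual t = 0 := by
        obtain ⟨d', hd'⟩ := hpcd
        rw [htdef, map_nsmul, hw, hdv, hd', smul_smul]
        have h8 : p ^ (c - a) * (p ^ c * d') = (p ^ (c - a) * d') * p ^ c := by ring
        rw [h8, mul_smul, hv1, smul_zero]
      have hbt := key t htn htdual
      have hdvd1 : ((p ^ a : ℕ) : ℤ) ∣ b := by
        rw [← htord]
        exact addOrderOf_dvd_iff_zsmul_eq_zero.mpr hbt
      have hdvd2 : p ^ a ∣ b.natAbs := by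
        rwa [Int.natCast_dvd] at hdvd1
      exact (Nat.Prime.pow_dvd_iff_le_factorization hpp hb0').mp hdvd2
    exact dvd_trans (Int.natCast_dvd_natCast.mpr hnat) (Int.natAbs_dvd.mpr dvd_rfl)
  · rintro ⟨cc, rfl⟩
    set x := Nat.gcdA d n with hx
    set y := Nat.gcdB d n with hy
    refine ⟨(cc * x) • torsMap n φ, ?_⟩
    refine AddMonoidHom.ext fun z => Subtype.ext ?_
    have hz : ((n : ℤ)) • (z : E') = 0 := by
      rw [natCast_zsmul]
      exact z.2
    have lhs : ((((cc * x) • torsMap n φ).comp (torsMap n φdual)) z : E')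
        = (cc * x) • φ (φdual (z : E')) := by
      rw [AddMonoidHom.comp_apply, AddMonoidHom.smul_apply, nTorsion_coe_zsmul]
      rfl
    have rhs : ((((Nat.gcd d n : ℤ) * cc) • AddMonoidHom.id ↥(nTorsion n E')) z : E')
        = ((Nat.gcd d n : ℤ) * cc) • (z : E') := by
      rw [AddMonoidHom.smul_apply, nTorsion_coe_zsmul]
      rfl
    rw [lhs, rhs, hdv', ← natCast_zsmul, smul_smul]
    have hbez : (Nat.gcd d n : ℤ) = d * x + n * y := Nat.gcd_eq_gcd_ab d n
    have harith : (Nat.gcd d n : ℤ) * cc = cc * x * d + y * cc * n := by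
      rw [hbez]; ring
    have h9 : (y * cc * (n : ℤ)) • (z : E') = 0 := by
      rw [mul_zsmul, hz, smul_zero]
    rw [harith, add_zsmul, h9, add_zero, mul_zsmul]
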